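/- For every α ∈ [0,1]: if there exists a set that has computable density 0 but is not intrinsically small, and there exists a set of intrinsic density α, then there exists a set Z with computable density α such that Z does not have intrinsic density α. -/

import Mathlib

open Filter Topology Classical

/-- `cnt A n = |A ∩ [0,n)|`. -/
noncomputable def cnt (A : Set ℕ) (n : ℕ) : ℕ :=
  ((Finset.range n).filter (· ∈ A)).card

/-- `dens A n = |A ∩ [0,n)| / n`, the density of `A` at `n`. -/
noncomputable def dens (A : Set ℕ) (n : ℕ) : ℝ := (cnt A n : ℝ) / n

/-- `A` has computable density `α`: every total computable strictly increasing
`f : ℕ → ℕ` pulls `A` back to a set of density `α`. -/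
def CompDensity (A : Set ℕ) (α : ℝ) : Prop :=
  ∀ f : ℕ → ℕ, Computable f → StrictMono f →
    Tendsto (dens {n | f n ∈ A}) atTop (𝓝 α)

/-- `A` has intrinsic density `α`: `π(A)` has density `α` for every
computable permutation `π` of `ℕ`. -/
def IntrinsicDensity (A : Set ℕ) (α : ℝ) : Prop :=
  ∀ π : ℕ ≃ ℕ, Computable ⇑π → Tendsto (dens (⇑π '' A)) atTop (𝓝 α)

/-!
Let `π` be a computable permutation with `π(X)` not of density 0, where `X` has computable
density 0. Since an intrinsic density is also a computable density, and adding or removing a set of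
computable density 0 does not change a computable density, both `Y ∪ X` and `Y \ X` have computable
density `α`. But `π(Y ∪ X)` is the disjoint union of `π(Y \ X)` and `π(X)`, so `π(Y ∪ X)` and
`π(Y \ X)` cannot both have density `α`.

Intrinsic density implies computable density: given a computable strictly increasing `f`, place an
enumeration of the complement of `range f` on a sparse decidable set `S` of positions (the squares,
or an initial segment if the complement is finite) and list `f` in order on the other positions.
This is a computable permutation `L`, and up to the density of `S` the density of `L⁻¹(Y)` at `n`
is that of `f⁻¹(Y)` at the number of positions below `n` outside `S`.
-/

open Nat

theorem Computable.nat_count {α : Type*} [Primcodable α] {p : α → ℕ → Prop}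
    [∀ a n, Decidable (p a n)] (hp : Computable₂ fun a n => decide (p a n)) :
    Computable₂ fun a n => count (p a) n := by
  have hstep : Computable₂ fun (a : α × ℕ) (s : ℕ × ℕ) =>
      s.2 + _root_.cond (decide (p a.1 s.1)) 1 0 :=
    (Primrec.nat_add.to_comp.comp (snd.comp snd)
      (cond (hp.comp (fst.comp fst) (fst.comp snd)) (const 1) (const 0))).to₂
  refine (nat_rec snd (const 0) hstep).of_eq fun ⟨a, n⟩ => ?_
  induction n with
  | zero => simp
  | succ n ih => simp only at ih ⊢; rw [ih, count_succ]; by_cases h : p a n <;> simp [h]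

theorem Computable.of_graph {α : Type*} [Primcodable α] {g : α → ℕ}
    (hg : Computable₂ fun a n => decide (g a = n)) : Computable g := by
  refine (Partrec.rfind hg.partrec₂).of_eq_tot fun a => Nat.mem_rfind.2 ⟨by simp, fun hm => ?_⟩
  simpa using hm.ne'

theorem Computable.equiv_symm {e : ℕ ≃ ℕ} (he : Computable e) : Computable e.symm :=
  of_graph <| (Primrec.eq.decide.to_comp.comp (he.comp snd) fst).of_eq
    fun ⟨m, n⟩ => by simp [Equiv.eq_symm_apply, eq_comm]

theorem Computable.nat_nth {p : ℕ → Prop} [DecidablePred p]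
    (hp : Computable fun n => decide (p n)) : Computable (Nat.nth p) := by
  by_cases hf : (Set.ofPred p).Finite
  · exact ((Primrec.list_getD 0).comp (Primrec.const _) Primrec.id).to_comp.of_eq
      fun n => (Nat.nth_eq_getD_sort hf n).symm
  · have hcount : Computable (Nat.count p) :=
      (nat_count (p := fun (_ n : ℕ) => p n) (hp.comp snd).to₂).comp Computable.id Computable.id
    refine of_graph <| (Primrec.and.to_comp.comp (hp.comp snd)
      (Primrec.eq.decide.to_comp.comp (hcount.comp snd) fst)).of_eq fun ⟨k, m⟩ => ?_
    simp only [← Bool.decide_and, decide_eq_decide]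
    exact ⟨fun ⟨hm, hc⟩ => hc ▸ Nat.nth_count hm,
      fun h => h ▸ ⟨Nat.nth_mem_of_infinite hf k, Nat.count_nth_of_infinite hf k⟩⟩

theorem Computable.decide_mem_range {f : ℕ → ℕ} (hf : Computable f) (hmono : StrictMono f) :
    Computable fun m => decide (m ∈ Set.range f) := by
  -- `m ∈ range f` iff `f k = m` for some `k ≤ m`, since `k ≤ f k`
  have hcount := nat_count (p := fun m k => f k = m)
    (Primrec.eq.decide.to_comp.comp (hf.comp snd) fst).to₂
  refine (Primrec.not.to_comp.comp (Primrec.eq.decide.to_comp.comp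
    (hcount.comp Computable.id succ) (const 0))).of_eq fun m => ?_
  simp only [id, ← decide_not, decide_eq_decide, Nat.count_ne_iff_exists,
    Nat.lt_succ_iff, Set.mem_range]
  exact ⟨fun ⟨k, _, hk⟩ => ⟨k, hk⟩, fun ⟨k, hk⟩ => ⟨k, hk ▸ hmono.id_le k, hk⟩⟩

theorem cnt_eq_count (A : Set ℕ) (n : ℕ) : cnt A n = Nat.count (· ∈ A) n :=
  (Nat.count_eq_card_filter_range _ n).symm

theorem cnt_union_of_disjoint {A B : Set ℕ} (h : Disjoint A B) (n : ℕ) :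
    cnt (A ∪ B) n = cnt A n + cnt B n := by
  simp only [cnt, Set.mem_union, Finset.filter_or]
  exact Finset.card_union_of_disjoint (Finset.disjoint_filter_filter' _ _ h)

theorem cnt_mono {A B : Set ℕ} (h : A ⊆ B) (n : ℕ) : cnt A n ≤ cnt B n :=
  Finset.card_le_card (Finset.monotone_filter_right _ fun _ _ ha => h ha)

theorem dens_nonneg (A : Set ℕ) (n : ℕ) : 0 ≤ dens A n := by
  unfold dens; positivity

theorem dens_mono {A B : Set ℕ} (h : A ⊆ B) (n : ℕ) : dens A n ≤ dens B n :=
  div_le_div_of_nonneg_right (by exact_mod_cast cnt_mono h n) n.cast_nonneg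

theorem dens_union_of_disjoint {A B : Set ℕ} (h : Disjoint A B) (n : ℕ) :
    dens (A ∪ B) n = dens A n + dens B n := by
  simp only [dens, cnt_union_of_disjoint h, Nat.cast_add, add_div]

theorem tendsto_dens_zero_of_subset {A B : Set ℕ} (h : A ⊆ B)
    (hB : Tendsto (dens B) atTop (𝓝 0)) : Tendsto (dens A) atTop (𝓝 0) :=
  squeeze_zero (dens_nonneg A) (dens_mono h) hB

theorem Filter.Tendsto.dens_union {A X : Set ℕ} {α : ℝ} (hA : Tendsto (dens A) atTop (𝓝 α))
    (hX : Tendsto (dens X) atTop (𝓝 0)) : Tendsto (dens (A ∪ X)) atTop (𝓝 α) := by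
  have hsplit : dens (A ∪ X) = fun n => dens A n + dens (X \ A) n := funext fun n => by
    rw [← Set.union_sdiff_self, dens_union_of_disjoint Set.disjoint_sdiff_right]
  simpa [hsplit] using hA.add (tendsto_dens_zero_of_subset Set.sdiff_subset hX)

theorem Filter.Tendsto.dens_diff {A X : Set ℕ} {α : ℝ} (hA : Tendsto (dens A) atTop (𝓝 α))
    (hX : Tendsto (dens X) atTop (𝓝 0)) : Tendsto (dens (A \ X)) atTop (𝓝 α) := by
  have hsplit : dens (A \ X) = fun n => dens A n - dens (A ∩ X) n := funext fun n => by
    rw [eq_sub_iff_add_eq, ← dens_union_of_disjoint Set.disjoint_sdiff_inter, Set.sdiff_union_inter]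
  simpa [hsplit] using hA.sub (tendsto_dens_zero_of_subset Set.inter_subset_right hX)

theorem CompDensity.union {A X : Set ℕ} {α : ℝ} (hA : CompDensity A α) (hX : CompDensity X 0) :
    CompDensity (A ∪ X) α :=
  fun f hf hmono => (hA f hf hmono).dens_union (hX f hf hmono)

theorem CompDensity.diff {A X : Set ℕ} {α : ℝ} (hA : CompDensity A α) (hX : CompDensity X 0) :
    CompDensity (A \ X) α :=
  fun f hf hmono => (hA f hf hmono).dens_diff (hX f hf hmono)

theorem tendsto_dens_of_finite {S : Set ℕ} (hS : S.Finite) : Tendsto (dens S) atTop (𝓝 0) := by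
  refine squeeze_zero (dens_nonneg S) (fun n => ?_) (tendsto_const_div_atTop_nhds_zero_nat
    (hS.toFinset.card : ℝ))
  refine div_le_div_of_nonneg_right (Nat.cast_le.2 (Finset.card_le_card fun m hm => ?_))
    n.cast_nonneg
  simpa using (Finset.mem_filter.1 hm).2

theorem Nat.count_and_comp_count (p q : ℕ → Prop) [DecidablePred p] [DecidablePred q] (n : ℕ) :
    count (fun m => p m ∧ q (count p m)) n = count q (count p n) := by
  induction n with
  | zero => simp
  | succ n ih => by_cases hp : p n <;> by_cases hq : q (count p n) <;> simp [count_succ, *]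

theorem Nat.count_add_count_not (p : ℕ → Prop) [DecidablePred p] (n : ℕ) :
    count p n + count (fun m => ¬ p m) n = n := by
  induction n with
  | zero => simp
  | succ n ih => by_cases hp : p n <;> simp [count_succ, *] <;> omega

theorem Nat.count_le_count_and_add_count_not (p q : ℕ → Prop) [DecidablePred p] [DecidablePred q]
    (n : ℕ) : count p n ≤ count (fun m => p m ∧ q m) n + count (fun m => ¬ q m) n := by
  induction n with
  | zero => simp
  | succ n ih => by_cases hp : p n <;> by_cases hq : q n <;> simp [count_succ, *] <;> omega

noncomputable def merge (S : Set ℕ) (g f : ℕ → ℕ) (m : ℕ) : ℕ :=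
  if m ∈ S then g (count (· ∈ S) m) else f (count (· ∉ S) m)

theorem merge_bijective {S : Set ℕ} {g f : ℕ → ℕ} (hSc : Sᶜ.Infinite) (hf : f.Injective)
    (hg : Set.BijOn (g ∘ count (· ∈ S)) S (Set.range f)ᶜ) : (merge S g f).Bijective := by
  refine ⟨fun m m' h => ?_, fun y => ?_⟩
  · by_cases hm : m ∈ S <;> by_cases hm' : m' ∈ S <;>
      simp only [merge, hm, hm', if_true, if_false] at h
    · exact hg.injOn hm hm' h
    · exact absurd ⟨_, h.symm⟩ (hg.mapsTo hm)
    · exact absurd ⟨_, h⟩ (hg.mapsTo hm')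
    · exact count_injective hm hm' (hf h)
  · by_cases hy : y ∈ Set.range f
    · obtain ⟨j, rfl⟩ := hy
      refine ⟨nth (· ∉ S) j, ?_⟩
      rw [merge, if_neg (nth_mem_of_infinite hSc j), count_nth_of_infinite hSc]
    · obtain ⟨m, hm, rfl⟩ := hg.surjOn hy
      exact ⟨m, if_pos hm⟩

theorem Computable.merge {S : Set ℕ} {g f : ℕ → ℕ} (hS : Computable fun m => decide (m ∈ S))
    (hg : Computable g) (hf : Computable f) : Computable (merge S g f) := by
  have hcount := nat_count (p := fun (_ m : ℕ) => m ∈ S) (hS.comp snd).to₂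
  have hcount' := nat_count (p := fun (_ m : ℕ) => m ∉ S)
    ((Primrec.not.to_comp.comp (hS.comp snd)).of_eq fun _ => by simp)
  refine (cond hS (hg.comp (hcount.comp Computable.id Computable.id))
    (hf.comp (hcount'.comp Computable.id Computable.id))).of_eq fun m => ?_
  by_cases hm : m ∈ S <;> simp [_root_.merge, hm]

theorem cnt_preimage_merge (S : Set ℕ) (g f : ℕ → ℕ) (Y : Set ℕ) (n : ℕ) :
    cnt (f ⁻¹' Y) (count (· ∉ S) n) ≤ cnt (merge S g f ⁻¹' Y) n ∧
      cnt (merge S g f ⁻¹' Y) n ≤ cnt (f ⁻¹' Y) (count (· ∉ S) n) + cnt S n := by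
  have hmerge : ∀ m ∉ S, merge S g f m = f (count (· ∉ S) m) := fun m hm => if_neg hm
  simp only [cnt_eq_count, ← count_and_comp_count]
  constructor
  · exact count_mono_left fun m _ ⟨hm, hY⟩ => by simpa [hmerge m hm] using hY
  · refine (count_le_count_and_add_count_not _ (· ∉ S) n).trans (Nat.add_le_add ?_ ?_)
    · exact count_mono_left fun m _ ⟨hY, hm⟩ => ⟨hm, by simpa [hmerge m hm] using hY⟩
    · exact count_mono_left fun m _ hm => by simpa using hm

theorem tendsto_dens_of_tendsto_comp_count {B S : Set ℕ} {α : ℝ} (hSc : Sᶜ.Infinite)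
    (h : Tendsto (fun n => dens B (count (· ∉ S) n)) atTop (𝓝 α)) :
    Tendsto (dens B) atTop (𝓝 α) :=
  (h.comp (nth_strictMono hSc).tendsto_atTop).congr fun j => by
    simp only [Function.comp_apply, count_nth_of_infinite hSc]

theorem tendsto_count_notMem_div {S : Set ℕ} (hS : Tendsto (dens S) atTop (𝓝 0)) :
    Tendsto (fun n => (count (· ∉ S) n : ℝ) / n) atTop (𝓝 1) := by
  refine (by simpa using tendsto_const_nhds.sub hS : Tendsto (fun n => 1 - dens S n) _ _).congr'
    ((eventually_ne_atTop 0).mono fun n hn => ?_)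
  have hsum : (cnt S n : ℝ) + count (· ∉ S) n = n := by
    exact_mod_cast cnt_eq_count S n ▸ count_add_count_not (· ∈ S) n
  rw [dens]
  field_simp
  linarith

theorem tendsto_dens_preimage_of_merge {S Y : Set ℕ} {g f : ℕ → ℕ} {α : ℝ}
    (hS : Tendsto (dens S) atTop (𝓝 0)) (hSc : Sᶜ.Infinite)
    (hY : Tendsto (dens (merge S g f ⁻¹' Y)) atTop (𝓝 α)) :
    Tendsto (dens (f ⁻¹' Y)) atTop (𝓝 α) := by
  refine tendsto_dens_of_tendsto_comp_count hSc ?_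
  have hcnt : Tendsto (fun n => (cnt (f ⁻¹' Y) (count (· ∉ S) n) : ℝ) / n) atTop (𝓝 α) := by
    have hlow : Tendsto (fun n => dens (merge S g f ⁻¹' Y) n - dens S n) atTop (𝓝 α) := by
      simpa using hY.sub hS
    refine tendsto_of_tendsto_of_tendsto_of_le_of_le hlow hY (fun n => ?_) (fun n => ?_)
    · rw [dens, dens, ← sub_div]
      gcongr
      rw [sub_le_iff_le_add, ← Nat.cast_add, Nat.cast_le]
      exact (cnt_preimage_merge S g f Y n).2
    · rw [dens]
      gcongr
      exact_mod_cast (cnt_preimage_merge S g f Y n).1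
  have hratio := hcnt.div (tendsto_count_notMem_div hS) one_ne_zero
  rw [div_one] at hratio
  refine hratio.congr' ((eventually_ne_atTop 0).mono fun n hn => ?_)
  rw [Pi.div_apply, div_div_div_cancel_right₀ (Nat.cast_ne_zero.2 hn)]
  rfl

theorem bijOn_nth_comp_count_of_infinite {S C : Set ℕ} (hS : S.Infinite) (hC : C.Infinite) :
    Set.BijOn (nth (· ∈ C) ∘ count (· ∈ S)) S C := by
  refine ⟨fun m _ => nth_mem_of_infinite (p := (· ∈ C)) hC _,
    fun m hm m' hm' h => count_injective hm hm' (nth_injective (p := (· ∈ C)) hC h),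
    fun c hc => ⟨nth (· ∈ S) (count (· ∈ C) c), nth_mem_of_infinite (p := (· ∈ S)) hS _, ?_⟩⟩
  simp [count_nth_of_infinite (p := (· ∈ S)) hS, nth_count (p := (· ∈ C)) hc]

theorem bijOn_nth_comp_count_of_finite {C : Set ℕ} (hC : C.Finite) :
    Set.BijOn (nth (· ∈ C) ∘ count (· ∈ Set.Iio hC.toFinset.card))
      (Set.Iio hC.toFinset.card) C := by
  have hcount : Set.EqOn (nth (· ∈ C)) (nth (· ∈ C) ∘ count (· ∈ Set.Iio hC.toFinset.card))
      (Set.Iio hC.toFinset.card) := fun m hm => by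
    simp [count_iff_forall.2 fun k hk => (hk.trans hm : k ∈ Set.Iio _)]
  have := (nth_injOn (p := (· ∈ C)) hC).bijOn_image.congr hcount
  rwa [image_nth_Iio_card (p := (· ∈ C)) hC] at this

theorem computable_decide_mem_range_mul_self :
    Computable fun m => decide (m ∈ Set.range fun k : ℕ => k * k) :=
  ((Primrec.eq.comp (Primrec.nat_mul.comp Primrec.nat_sqrt Primrec.nat_sqrt) Primrec.id).decide
    |>.to_comp).of_eq fun m => by simp [Nat.exists_mul_self]

theorem infinite_range_mul_self : (Set.range fun k : ℕ => k * k).Infinite :=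
  Set.infinite_range_of_injective fun _ _ h => Nat.mul_self_inj.1 h

theorem infinite_compl_range_mul_self : (Set.range fun k : ℕ => k * k)ᶜ.Infinite := by
  refine Set.infinite_of_injective_forall_mem (f := fun k => (k + 1) * (k + 1) + 1)
    (fun a b h => by simpa using Nat.mul_self_inj.1 (Nat.add_right_cancel h)) fun k => ?_
  exact Nat.not_exists_sq (m := k + 1) (by omega) (by nlinarith)

theorem cnt_range_mul_self_le (n : ℕ) : cnt (Set.range fun k : ℕ => k * k) n ≤ n.sqrt + 1 := by
  refine (Finset.card_le_card fun m hm => ?_).trans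
    ((Finset.card_image_le (s := Finset.range (n.sqrt + 1)) (f := fun k => k * k)).trans_eq
      (Finset.card_range _))
  obtain ⟨hmn, k, rfl⟩ := by simpa using hm
  simpa using ⟨k, Nat.le_sqrt.2 hmn.le, rfl⟩

theorem tendsto_dens_range_mul_self :
    Tendsto (dens (Set.range fun k : ℕ => k * k)) atTop (𝓝 0) := by
  have hlim : Tendsto (fun n : ℕ => (√(n : ℝ))⁻¹ + 1 / n) atTop (𝓝 0) := by
    simpa using (tendsto_inv_atTop_zero.comp
      (Real.tendsto_sqrt_atTop.comp tendsto_natCast_atTop_atTop)).add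
      tendsto_one_div_atTop_nhds_zero_nat
  refine squeeze_zero (dens_nonneg _) (fun n => ?_) hlim
  have hsqrt : ((n.sqrt + 1 : ℕ) : ℝ) ≤ √(n : ℝ) + 1 := by
    push_cast; linarith [Real.nat_sqrt_le_real_sqrt (a := n)]
  calc dens _ n ≤ (√(n : ℝ) + 1) / n :=
        div_le_div_of_nonneg_right ((Nat.cast_le.2 (cnt_range_mul_self_le n)).trans hsqrt)
          n.cast_nonneg
    _ = (√(n : ℝ))⁻¹ + 1 / n := by rw [add_div, Real.sqrt_div_self', one_div]

theorem IntrinsicDensity.compDensity {Y : Set ℕ} {α : ℝ} (hY : IntrinsicDensity Y α) :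
    CompDensity Y α := by
  intro f hf hmono
  obtain ⟨S, hS, hS0, hSc, hbij⟩ : ∃ S : Set ℕ, Computable (fun m => decide (m ∈ S)) ∧
      Tendsto (dens S) atTop (𝓝 0) ∧ Sᶜ.Infinite ∧
      Set.BijOn (nth (· ∈ (Set.range f)ᶜ) ∘ count (· ∈ S)) S (Set.range f)ᶜ := by
    rcases (Set.range f)ᶜ.finite_or_infinite with hC | hC
    · refine ⟨_, ?_, tendsto_dens_of_finite (Set.finite_Iio _),
        Set.compl_Iio (a := hC.toFinset.card) ▸ Set.Ici_infinite _,
        by convert bijOn_nth_comp_count_of_finite hC⟩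
      exact (Primrec.nat_lt.comp Primrec.id (Primrec.const hC.toFinset.card)).decide.to_comp.of_eq
        fun m => by simp
    · exact ⟨_, computable_decide_mem_range_mul_self, tendsto_dens_range_mul_self,
        infinite_compl_range_mul_self, bijOn_nth_comp_count_of_infinite infinite_range_mul_self hC⟩
  have hg : Computable (nth (· ∈ (Set.range f)ᶜ)) := Computable.nat_nth <|
    (Primrec.not.to_comp.comp (hf.decide_mem_range hmono)).of_eq fun m => by
      simp only [Set.mem_compl_iff, decide_not]
  let L := Equiv.ofBijective _ (merge_bijective hSc hmono.injective hbij)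
  have hLY := hY L.symm (hS.merge hg hf).equiv_symm
  rw [L.image_symm_eq_preimage] at hLY
  exact tendsto_dens_preimage_of_merge hS0 hSc hLY

theorem stmt13_general (α : ℝ)
    (hsep : ∃ X : Set ℕ, CompDensity X 0 ∧ ¬ IntrinsicDensity X 0)
    (hY : ∃ Y : Set ℕ, IntrinsicDensity Y α) :
    ∃ Z : Set ℕ, CompDensity Z α ∧ ¬ IntrinsicDensity Z α := by
  obtain ⟨X, hX0, hX⟩ := hsep
  obtain ⟨Y, hY⟩ := hY
  obtain ⟨π, hπ, hπX⟩ : ∃ π : ℕ ≃ ℕ, Computable π ∧ ¬ Tendsto (dens (π '' X)) atTop (𝓝 0) := by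
    simpa [IntrinsicDensity] using hX
  by_contra! hZ
  have hunion := hZ _ (hY.compDensity.union hX0) π hπ
  have hdiff := hZ _ (hY.compDensity.diff hX0) π hπ
  have hsplit : dens (π '' (Y ∪ X)) = dens (π '' (Y \ X)) + dens (π '' X) := funext fun n => by
    rw [← Set.sdiff_union_self, Set.image_union, dens_union_of_disjoint
      ((Set.disjoint_image_iff π.injective).2 Set.disjoint_sdiff_left), Pi.add_apply]
  exact hπX (by simpa [hsplit] using hunion.sub hdiff)

theorem stmt13 (α : ℝ) (hα0 : 0 ≤ α) (hα1 : α ≤ 1)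
    (hsep : ∃ X : Set ℕ, CompDensity X 0 ∧ ¬ IntrinsicDensity X 0)
    (hY : ∃ Y : Set ℕ, IntrinsicDensity Y α) :
    ∃ Z : Set ℕ, CompDensity Z α ∧ ¬ IntrinsicDensity Z α :=
  stmt13_general α hsep hY
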